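/- Under Assumptions IV, weak monotonicity, and linearity of the instrument propensity score e(X) = E[Z|X] in X, the linear IV estimand satisfies β_IV = E[c(X)·π(X)·Var[Z|X]·τ(X)] / E[c(X)·π(X)·Var[Z|X]], where c(x) ∈ {−1,1} equals 1 on the complier region and −1 on the defier region. (Theorem 2.) -/

import Mathlib

open Finset

section Defs

variable {Ω 𝓧 : Type*} [Fintype Ω]

/-- Expectation of `f` under weights `p` on a finite outcome space. -/
noncomputable def pexp (p : Ω → ℝ) (f : Ω → ℝ) : ℝ := ∑ ω, p ω * f ω

open Classical in
/-- Probability of the event `A` under weights `p`. -/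
noncomputable def pprob (p : Ω → ℝ) (A : Ω → Prop) : ℝ := ∑ ω, if A ω then p ω else 0

open Classical in
/-- Conditional expectation of `f` given the event `A`. -/
noncomputable def eexp (p : Ω → ℝ) (A : Ω → Prop) (f : Ω → ℝ) : ℝ :=
  (∑ ω, if A ω then p ω * f ω else 0) / pprob p A

/-- Conditional probability of `A` given `B`. -/
noncomputable def cprob (p : Ω → ℝ) (A B : Ω → Prop) : ℝ :=
  pprob p (fun ω => A ω ∧ B ω) / pprob p B

/-- `p` is a probability vector. -/
def IsProb (p : Ω → ℝ) : Prop := (∀ ω, 0 ≤ p ω) ∧ ∑ ω, p ω = 1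

/-- Conditional expectation of `f` given `X = x`. -/
noncomputable def condMean (p : Ω → ℝ) (X : Ω → 𝓧) (f : Ω → ℝ) (x : 𝓧) : ℝ :=
  eexp p (fun ω => X ω = x) f

/-- Conditional expectation of `f` given `X = x` and `Z = z`. -/
noncomputable def condMeanOn (p : Ω → ℝ) (X : Ω → 𝓧) (Z : Ω → ℝ) (f : Ω → ℝ) (x : 𝓧) (z : ℝ) : ℝ :=
  eexp p (fun ω => X ω = x ∧ Z ω = z) f

/-- Conditional cslope coefficient `E[f | Z=1, X=x] - E[f | Z=0, X=x]`. -/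
noncomputable def cslope (p : Ω → ℝ) (X : Ω → 𝓧) (Z : Ω → ℝ) (f : Ω → ℝ) (x : 𝓧) : ℝ :=
  condMeanOn p X Z f x 1 - condMeanOn p X Z f x 0

/-- Conditional variance of `f` given the event `A`. -/
noncomputable def evVar (p : Ω → ℝ) (A : Ω → Prop) (f : Ω → ℝ) : ℝ :=
  eexp p A (fun ω => (f ω - eexp p A f) ^ 2)

/-- Conditional variance of `f` given `X = x`. -/
noncomputable def condVar (p : Ω → ℝ) (X : Ω → 𝓧) (f : Ω → ℝ) (x : 𝓧) : ℝ :=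
  evVar p (fun ω => X ω = x) f

end Defs

/-!
By Frisch–Waugh–Lovell, each OLS coefficient on `Z` is the covariance of the outcome with the
partialled-out instrument `Z - e(X)` divided by `E[(Z - e(X))²]`; linearity of `e` is what puts
`e(X) = E[Z | X]` in the span of the controls. Hence `β_IV = E[Y (Z - e(X))] / E[D (Z - e(X))]`.
Since `Z` is independent of the potential outcomes given `X`, these covariances equal
`E[e(1 - e) (Y1 - Y0)(D1 - D0)]` and `E[e(1 - e) (D1 - D0)]`, and `e(1 - e) = Var[Z | X]`.
Within a covariate cell, monotonicity makes `D1 - D0` equal to the constant `c(x)` on switchers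
and `0` elsewhere, which produces the factors `c(x) π(x) τ(x)` and `c(x) π(x)`.
-/

open Classical in
noncomputable def pexpOn {Ω : Type*} [Fintype Ω] (p : Ω → ℝ) (A : Ω → Prop) (f : Ω → ℝ) : ℝ :=
  ∑ ω, if A ω then p ω * f ω else 0

section Expectation

variable {Ω : Type*} [Fintype Ω] {p : Ω → ℝ}

lemma pexp_add (f g : Ω → ℝ) : pexp p (fun ω => f ω + g ω) = pexp p f + pexp p g := by
  simp only [pexp, mul_add, sum_add_distrib]

lemma pexp_sub (f g : Ω → ℝ) : pexp p (fun ω => f ω - g ω) = pexp p f - pexp p g := by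
  simp only [pexp, mul_sub, sum_sub_distrib]

lemma pexp_const_mul (c : ℝ) (f : Ω → ℝ) : pexp p (fun ω => c * f ω) = c * pexp p f := by
  simp only [pexp, mul_sum, mul_left_comm]

lemma pexp_congr_ae (hp0 : ∀ ω, 0 ≤ p ω) {f g : Ω → ℝ} (h : ∀ ω, 0 < p ω → f ω = g ω) :
    pexp p f = pexp p g := by
  refine sum_congr rfl fun ω _ => ?_
  rcases (hp0 ω).eq_or_lt with hpω | hpω
  · simp [← hpω]
  · rw [h ω hpω]

lemma pprob_nonneg (hp0 : ∀ ω, 0 ≤ p ω) (A : Ω → Prop) : 0 ≤ pprob p A :=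
  sum_nonneg fun ω _ => by split_ifs <;> simp [hp0]

lemma le_pprob (hp0 : ∀ ω, 0 ≤ p ω) {A : Ω → Prop} {ω : Ω} (hA : A ω) : p ω ≤ pprob p A := by
  classical
  unfold pprob
  calc p ω = if A ω then p ω else 0 := (if_pos hA).symm
    _ ≤ ∑ ω, if A ω then p ω else 0 :=
      single_le_sum (f := fun ω => if A ω then p ω else 0)
        (fun ω _ => by split_ifs <;> simp [hp0]) (mem_univ ω)

lemma pprob_mono (hp0 : ∀ ω, 0 ≤ p ω) {A B : Ω → Prop} (h : ∀ ω, A ω → B ω) :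
    pprob p A ≤ pprob p B :=
  sum_le_sum fun ω _ => by split_ifs <;> simp_all

lemma pexpOn_one (A : Ω → Prop) : pexpOn p A (fun _ => 1) = pprob p A := by
  simp only [pexpOn, pprob, mul_one]

lemma pexpOn_neg (A : Ω → Prop) (f : Ω → ℝ) :
    pexpOn p A (fun ω => -f ω) = -pexpOn p A f := by
  simp only [pexpOn, ← sum_neg_distrib]
  exact sum_congr rfl fun ω _ => by split_ifs <;> simp

lemma pexpOn_eq_zero_of_pprob_eq_zero (hp0 : ∀ ω, 0 ≤ p ω) {A B : Ω → Prop}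
    (hB : pprob p B = 0) (hAB : ∀ ω, A ω → B ω) (f : Ω → ℝ) : pexpOn p A f = 0 := by
  have hsupp : ∀ ω, A ω → p ω = 0 := fun ω hA =>
    le_antisymm (hB ▸ le_pprob hp0 (hAB ω hA)) (hp0 ω)
  exact sum_eq_zero fun ω _ => by split_ifs with hA <;> simp [hsupp ω, *]

lemma pprob_mul_eexp (hp0 : ∀ ω, 0 ≤ p ω) (A : Ω → Prop) (f : Ω → ℝ) :
    pprob p A * eexp p A f = pexpOn p A f := by
  rcases eq_or_ne (pprob p A) 0 with hA | hA
  · rw [hA, zero_mul, pexpOn_eq_zero_of_pprob_eq_zero hp0 hA (fun _ h => h)]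
  · exact mul_div_cancel₀ _ hA

lemma pprob_mul_cprob (hp0 : ∀ ω, 0 ≤ p ω) (A B : Ω → Prop) :
    pprob p B * cprob p A B = pprob p (fun ω => A ω ∧ B ω) := by
  rcases eq_or_ne (pprob p B) 0 with hB | hB
  · rw [hB, zero_mul, ← pexpOn_one, pexpOn_eq_zero_of_pprob_eq_zero hp0 hB (fun _ h => h.2)]
  · exact mul_div_cancel₀ _ hB

lemma sign_cprob_mul_pexpOn (hp0 : ∀ ω, 0 ≤ p ω) (A B : Ω → Prop) (f : Ω → ℝ) :
    Real.sign (cprob p A B) * pexpOn p (fun ω => A ω ∧ B ω) f =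
      pexpOn p (fun ω => A ω ∧ B ω) f := by
  rcases (div_nonneg (pprob_nonneg hp0 _) (pprob_nonneg hp0 B)).eq_or_lt with hπ | hπ
  · change 0 = cprob p A B at hπ
    have hJ : pprob p (fun ω => A ω ∧ B ω) = 0 ∨ pprob p B = 0 := div_eq_zero_iff.mp hπ.symm
    rw [← hπ, Real.sign_zero, zero_mul, eq_comm]
    rcases hJ with hJ | hJ
    · exact pexpOn_eq_zero_of_pprob_eq_zero hp0 hJ (fun _ h => h) f
    · exact pexpOn_eq_zero_of_pprob_eq_zero hp0 hJ (fun _ h => h.2) f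
  · rw [cprob, Real.sign_of_pos hπ, one_mul]

lemma pprob_congr {A B : Ω → Prop} (h : ∀ ω, A ω ↔ B ω) : pprob p A = pprob p B := by
  congr 1
  exact funext fun ω => propext (h ω)

lemma pexpOn_eq_pprob_of_binary {Z : Ω → ℝ} (hZ : ∀ ω, Z ω = 0 ∨ Z ω = 1) (A : Ω → Prop) :
    pexpOn p A Z = pprob p (fun ω => Z ω = 1 ∧ A ω) :=
  sum_congr rfl fun ω _ => by rcases hZ ω with h | h <;> split_ifs <;> simp_all

lemma evVar_eq_of_binary (hp0 : ∀ ω, 0 ≤ p ω) {Z : Ω → ℝ} (hZ : ∀ ω, Z ω = 0 ∨ Z ω = 1)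
    (A : Ω → Prop) : evVar p A Z = eexp p A Z * (1 - eexp p A Z) := by
  set m := eexp p A Z
  rcases eq_or_ne (pprob p A) 0 with hA | hA
  · simp [evVar, m, eexp, hA]
  · have hsq : pexpOn p A (fun ω => (Z ω - m) ^ 2) =
        (1 - 2 * m) * pexpOn p A Z + m ^ 2 * pprob p A := by
      simp only [pexpOn, pprob, mul_sum, ← sum_add_distrib]
      refine sum_congr rfl fun ω _ => ?_
      split_ifs <;> rcases hZ ω with h | h <;> simp [h] <;> ring
    change pexpOn p A _ / pprob p A = _
    rw [hsq, ← pprob_mul_eexp hp0 A Z]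
    field_simp
    ring

end Expectation

section Fibers

variable {Ω 𝓧 : Type*} [Fintype Ω] {p : Ω → ℝ} (X : Ω → 𝓧)

lemma pexpOn_comp_mul (h : 𝓧 → ℝ) (f : Ω → ℝ) (x : 𝓧) :
    pexpOn p (fun ω => X ω = x) (fun ω => h (X ω) * f ω) =
      h x * pexpOn p (fun ω => X ω = x) f := by
  simp only [pexpOn, mul_sum]
  refine sum_congr rfl fun ω _ => ?_
  split_ifs with hx
  · rw [hx, mul_left_comm]
  · rw [mul_zero]

lemma pexp_eq_pexp_comp_of_pexpOn (hp0 : ∀ ω, 0 ≤ p ω) {G : Ω → ℝ} {H : 𝓧 → ℝ}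
    (hGH : ∀ x, 0 < pprob p (fun ω => X ω = x) →
      pexpOn p (fun ω => X ω = x) G = pprob p (fun ω => X ω = x) * H x) :
    pexp p G = pexp p (fun ω => H (X ω)) := by
  classical
  have hfib : ∀ F : Ω → ℝ, pexp p F = ∑ x ∈ univ.image X, pexpOn p (fun ω => X ω = x) F :=
    fun F => by
      rw [pexp, ← sum_fiberwise_of_maps_to (g := X) (t := univ.image X)
        (fun ω _ => mem_image_of_mem X (mem_univ ω))]
      refine sum_congr rfl fun x _ => ?_
      rw [sum_filter, pexpOn]
  rw [hfib, hfib]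
  refine sum_congr rfl fun x _ => ?_
  rcases (pprob_nonneg hp0 (fun ω => X ω = x)).eq_or_lt with hx | hx
  · rw [pexpOn_eq_zero_of_pprob_eq_zero hp0 hx.symm (fun _ h => h),
      pexpOn_eq_zero_of_pprob_eq_zero hp0 hx.symm (fun _ h => h)]
  · have hHX := pexpOn_comp_mul (p := p) X H (fun _ => 1) x
    simp only [mul_one] at hHX
    rw [hGH x hx, hHX, pexpOn_one, mul_comm]

lemma pexp_comp_mul_eq_of_pexpOn (hp0 : ∀ ω, 0 ≤ p ω) {Z : Ω → ℝ} {μ : 𝓧 → ℝ}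
    (hμ : ∀ x, 0 < pprob p (fun ω => X ω = x) →
      pexpOn p (fun ω => X ω = x) Z = μ x * pprob p (fun ω => X ω = x))
    (h : 𝓧 → ℝ) :
    pexp p (fun ω => h (X ω) * Z ω) = pexp p (fun ω => h (X ω) * μ (X ω)) :=
  pexp_eq_pexp_comp_of_pexpOn X hp0 (H := fun x => h x * μ x) fun x hx => by
    rw [pexpOn_comp_mul, hμ x hx]
    ring

lemma pexp_comp_mul_sub_condMean (hp0 : ∀ ω, 0 ≤ p ω) (Z : Ω → ℝ) (h : 𝓧 → ℝ) :
    pexp p (fun ω => h (X ω) * (Z ω - condMean p X Z (X ω))) = 0 := by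
  have htower := pexp_comp_mul_eq_of_pexpOn X hp0 (Z := Z) (μ := condMean p X Z)
    (fun x _ => by rw [mul_comm, condMean, pprob_mul_eexp hp0]) h
  simp only [mul_sub]
  rw [pexp_sub, htower, sub_self]

lemma pexp_mul_eq_condMean_mul_of_condIndep {𝓥 : Type*} (hp0 : ∀ ω, 0 ≤ p ω) (V : Ω → 𝓥)
    {Z : Ω → ℝ} (hZ : ∀ ω, Z ω = 0 ∨ Z ω = 1)
    (hindep : ∀ x v, pprob p (fun ω => X ω = x ∧ V ω = v ∧ Z ω = 1) * pprob p (fun ω => X ω = x)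
      = pprob p (fun ω => X ω = x ∧ V ω = v) * pprob p (fun ω => X ω = x ∧ Z ω = 1))
    (h : 𝓧 → 𝓥 → ℝ) :
    pexp p (fun ω => h (X ω) (V ω) * Z ω) =
      pexp p (fun ω => h (X ω) (V ω) * condMean p X Z (X ω)) := by
  refine pexp_comp_mul_eq_of_pexpOn (fun ω => (X ω, V ω)) hp0 (μ := fun w => condMean p X Z w.1)
    (fun ⟨x, v⟩ hxv => ?_) (fun w => h w.1 w.2)
  simp only [Prod.mk.injEq] at hxv ⊢
  have hx : 0 < pprob p (fun ω => X ω = x) := hxv.trans_le (pprob_mono hp0 fun _ h => h.1)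
  have hXZ : pprob p (fun ω => X ω = x ∧ Z ω = 1) =
      condMean p X Z x * pprob p (fun ω => X ω = x) := by
    rw [mul_comm, condMean, pprob_mul_eexp hp0, pexpOn_eq_pprob_of_binary hZ]
    exact pprob_congr fun ω => and_comm
  apply mul_right_cancel₀ hx.ne'
  rw [pexpOn_eq_pprob_of_binary hZ,
    pprob_congr (B := fun ω => X ω = x ∧ V ω = v ∧ Z ω = 1) fun ω => and_rotate, hindep, hXZ]
  ring

end Fibers

section LeastSquares

variable {Ω : Type*} [Fintype Ω] {p : Ω → ℝ}

lemma pexp_mul_eq_zero_of_forall_le {R V : Ω → ℝ}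
    (h : ∀ t, pexp p (fun ω => R ω ^ 2) ≤ pexp p (fun ω => (R ω - t * V ω) ^ 2)) :
    pexp p (fun ω => R ω * V ω) = 0 := by
  set B := pexp p (fun ω => R ω * V ω)
  have hquad : ∀ t, 0 ≤ pexp p (fun ω => V ω ^ 2) * (t * t) + -2 * B * t + 0 := fun t => by
    have hexpand : pexp p (fun ω => (R ω - t * V ω) ^ 2) =
        pexp p (fun ω => R ω ^ 2) + (pexp p (fun ω => V ω ^ 2) * (t * t) + -2 * B * t) := by
      simp only [B, pexp, sum_mul, mul_sum, ← sum_add_distrib]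
      exact sum_congr rfl fun ω _ => by ring
    linarith [h t]
  have hdisc := discrim_le_zero hquad
  rw [discrim] at hdisc
  exact pow_eq_zero_iff two_ne_zero |>.mp (by nlinarith [sq_nonneg B])

variable {k : ℕ} (X : Ω → Fin k → ℝ) {Y Z : Ω → ℝ} {b : ℝ} {g : Fin k → ℝ}

lemma pexp_ols_residual_mul_eq_zero
    (hmin : ∀ (b' : ℝ) (g' : Fin k → ℝ),
      pexp p (fun ω => (Y ω - Z ω * b - ∑ j, X ω j * g j) ^ 2) ≤
        pexp p (fun ω => (Y ω - Z ω * b' - ∑ j, X ω j * g' j) ^ 2))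
    (s : ℝ) (a : Fin k → ℝ) :
    pexp p (fun ω => (Y ω - Z ω * b - ∑ j, X ω j * g j) * (Z ω * s + ∑ j, X ω j * a j)) = 0 :=
  pexp_mul_eq_zero_of_forall_le fun t => (hmin (b + t * s) (fun j => g j + t * a j)).trans_eq <| by
    congr 1
    funext ω
    have hsum : ∑ j, X ω j * (g j + t * a j) = ∑ j, X ω j * g j + t * ∑ j, X ω j * a j := by
      simp only [mul_add, sum_add_distrib, mul_sum, mul_left_comm]
    rw [hsum]
    ring

lemma ols_coeff_mul_pexp_sq (hp0 : ∀ ω, 0 ≤ p ω)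
    (hmin : ∀ (b' : ℝ) (g' : Fin k → ℝ),
      pexp p (fun ω => (Y ω - Z ω * b - ∑ j, X ω j * g j) ^ 2) ≤
        pexp p (fun ω => (Y ω - Z ω * b' - ∑ j, X ω j * g' j) ^ 2))
    {m : Ω → ℝ} {α : Fin k → ℝ} (hm : ∀ ω, 0 < p ω → m ω = ∑ j, X ω j * α j)
    (horth : ∀ a : Fin k → ℝ, pexp p (fun ω => (∑ j, X ω j * a j) * (Z ω - m ω)) = 0) :
    b * pexp p (fun ω => (Z ω - m ω) ^ 2) = pexp p (fun ω => Y ω * (Z ω - m ω)) := by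
  set R := fun ω => Y ω - Z ω * b - ∑ j, X ω j * g j
  have hRU : pexp p (fun ω => R ω * (Z ω - m ω)) = 0 :=
    (pexp_congr_ae hp0 fun ω hω => by
      rw [hm ω hω]
      simp only [R, Pi.neg_apply, mul_neg, sum_neg_distrib]
      ring).trans
      (pexp_ols_residual_mul_eq_zero X hmin 1 (-α))
  have hmU : pexp p (fun ω => m ω * (Z ω - m ω)) = 0 :=
    (pexp_congr_ae hp0 fun ω hω => by rw [hm ω hω]).trans (horth α)
  have hdecomp : (fun ω => Y ω * (Z ω - m ω)) = fun ω => R ω * (Z ω - m ω) +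
      b * (Z ω - m ω) ^ 2 + b * (m ω * (Z ω - m ω)) + (∑ j, X ω j * g j) * (Z ω - m ω) := by
    funext ω
    simp only [R]
    ring
  rw [hdecomp, pexp_add, pexp_add, pexp_add, pexp_const_mul, pexp_const_mul, hRU, hmU, horth g]
  ring

end LeastSquares

lemma observed_eq_ite {Ω : Type*} {Z D0 D1 Y0 Y1 D Y : Ω → ℝ} (hZ : ∀ ω, Z ω = 0 ∨ Z ω = 1)
    (hD0 : ∀ ω, D0 ω = 0 ∨ D0 ω = 1) (hD1 : ∀ ω, D1 ω = 0 ∨ D1 ω = 1)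
    (hD : ∀ ω, D ω = if Z ω = 1 then D1 ω else D0 ω)
    (hY : ∀ ω, Y ω = if D ω = 1 then Y1 ω else Y0 ω) (ω : Ω) :
    Y ω = if Z ω = 1 then D1 ω * Y1 ω + (1 - D1 ω) * Y0 ω else D0 ω * Y1 ω + (1 - D0 ω) * Y0 ω := by
  rcases hD0 ω with h0 | h0 <;> rcases hD1 ω with h1 | h1 <;> rcases hZ ω with hz | hz <;>
    simp [hY ω, hD ω, h0, h1, hz]

section PotentialOutcomes

variable {Ω : Type*} [Fintype Ω] {p : Ω → ℝ}

lemma pexp_ite_mul_sub {Z V V0 V1 m : Ω → ℝ} (hZ : ∀ ω, Z ω = 0 ∨ Z ω = 1)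
    (hV : ∀ ω, V ω = if Z ω = 1 then V1 ω else V0 ω)
    (htower : pexp p (fun ω => (V1 ω * (1 - m ω) + V0 ω * m ω) * Z ω) =
      pexp p (fun ω => (V1 ω * (1 - m ω) + V0 ω * m ω) * m ω)) :
    pexp p (fun ω => V ω * (Z ω - m ω)) = pexp p (fun ω => m ω * (1 - m ω) * (V1 ω - V0 ω)) := by
  have hsplit : (fun ω => V ω * (Z ω - m ω)) =
      fun ω => (V1 ω * (1 - m ω) + V0 ω * m ω) * Z ω - V0 ω * m ω := by
    funext ω
    rcases hZ ω with h | h <;> simp [hV ω, h]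
  rw [hsplit, pexp_sub, htower, ← pexp_sub]
  congr 1
  funext ω
  ring

lemma pexp_ite_mul_sub_condMean {𝓧 𝓥 : Type*} (hp0 : ∀ ω, 0 ≤ p ω) (X : Ω → 𝓧) (W : Ω → 𝓥)
    {Z : Ω → ℝ} (hZ : ∀ ω, Z ω = 0 ∨ Z ω = 1)
    (hindep : ∀ x w, pprob p (fun ω => X ω = x ∧ W ω = w ∧ Z ω = 1) * pprob p (fun ω => X ω = x)
      = pprob p (fun ω => X ω = x ∧ W ω = w) * pprob p (fun ω => X ω = x ∧ Z ω = 1))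
    {V : Ω → ℝ} (v0 v1 : 𝓥 → ℝ) (hV : ∀ ω, V ω = if Z ω = 1 then v1 (W ω) else v0 (W ω)) :
    pexp p (fun ω => V ω * (Z ω - condMean p X Z (X ω))) =
      pexp p (fun ω => condVar p X Z (X ω) * (v1 (W ω) - v0 (W ω))) := by
  rw [pexp_ite_mul_sub hZ hV (pexp_mul_eq_condMean_mul_of_condIndep X hp0 W hZ hindep
    fun x w => v1 w * (1 - condMean p X Z x) + v0 w * condMean p X Z x)]
  simp only [condVar, evVar_eq_of_binary hp0 hZ]
  rfl

variable {D0 D1 : Ω → ℝ} {A : Ω → Prop}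

lemma pexpOn_mul_sub_of_le (hp0 : ∀ ω, 0 ≤ p ω) (hD0 : ∀ ω, D0 ω = 0 ∨ D0 ω = 1)
    (hD1 : ∀ ω, D1 ω = 0 ∨ D1 ω = 1) (hle : ∀ ω, 0 < p ω → A ω → D0 ω ≤ D1 ω) (f : Ω → ℝ) :
    pexpOn p A (fun ω => f ω * (D1 ω - D0 ω)) = pexpOn p (fun ω => D1 ω ≠ D0 ω ∧ A ω) f := by
  refine sum_congr rfl fun ω _ => ?_
  rcases (hp0 ω).eq_or_lt with hpω | hpω
  · simp [← hpω]
  by_cases hA : A ω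
  · have hω := hle ω hpω hA
    rcases hD0 ω with h0 | h0 <;> rcases hD1 ω with h1 | h1 <;> norm_num [h0, h1] at hω <;>
      simp [hA, h0, h1]
  · simp [hA]

lemma cprob_sub_cprob_of_le (hp0 : ∀ ω, 0 ≤ p ω) (hle : ∀ ω, 0 < p ω → A ω → D0 ω ≤ D1 ω) :
    cprob p (fun ω => D0 ω ≤ D1 ω) A - cprob p (fun ω => D1 ω ≤ D0 ω) A =
      cprob p (fun ω => D1 ω ≠ D0 ω) A := by
  rw [cprob, cprob, cprob, ← sub_div, pprob, pprob, pprob, ← sum_sub_distrib]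
  congr 1
  refine sum_congr rfl fun ω _ => ?_
  rcases (hp0 ω).eq_or_lt with hpω | hpω
  · simp [← hpω]
  by_cases hA : A ω
  · have hω := hle ω hpω hA
    by_cases heq : D1 ω = D0 ω
    · simp [hA, heq]
    · have hlt : ¬D1 ω ≤ D0 ω := fun h => heq (le_antisymm h hω)
      simp [hA, heq, hω, hlt]
  · simp [hA]

lemma pexpOn_mul_sub_eq_sign_mul (hp0 : ∀ ω, 0 ≤ p ω) (hD0 : ∀ ω, D0 ω = 0 ∨ D0 ω = 1)
    (hD1 : ∀ ω, D1 ω = 0 ∨ D1 ω = 1)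
    (hmono : (∀ ω, 0 < p ω → A ω → D0 ω ≤ D1 ω) ∨ (∀ ω, 0 < p ω → A ω → D1 ω ≤ D0 ω))
    (f : Ω → ℝ) :
    pexpOn p A (fun ω => f ω * (D1 ω - D0 ω)) =
      Real.sign (cprob p (fun ω => D0 ω ≤ D1 ω) A - cprob p (fun ω => D1 ω ≤ D0 ω) A) *
        pexpOn p (fun ω => D1 ω ≠ D0 ω ∧ A ω) f := by
  rcases hmono with hle | hle
  · rw [cprob_sub_cprob_of_le hp0 hle, sign_cprob_mul_pexpOn hp0,
      pexpOn_mul_sub_of_le hp0 hD0 hD1 hle]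
  · have hne : ∀ ω, D0 ω ≠ D1 ω ↔ D1 ω ≠ D0 ω := fun ω => ne_comm
    have hswap := pexpOn_mul_sub_of_le hp0 hD1 hD0 hle f
    have hsign := cprob_sub_cprob_of_le hp0 hle
    simp only [hne] at hswap hsign
    rw [← neg_sub, hsign, Real.sign_neg, neg_mul, sign_cprob_mul_pexpOn hp0, ← hswap,
      ← pexpOn_neg]
    simp only [← mul_neg, neg_sub]

end PotentialOutcomes

lemma IsProb.exists_pos {Ω : Type*} [Fintype Ω] {p : Ω → ℝ} (hp : IsProb p) : ∃ ω, 0 < p ω := by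
  by_contra! h
  have hzero : ∑ ω, p ω = 0 := sum_eq_zero fun ω _ => le_antisymm (h ω) (hp.1 ω)
  linarith [hp.2]

lemma pexp_sq_sub_condMean_pos {Ω 𝓧 : Type*} [Fintype Ω] {p : Ω → ℝ} (hp : IsProb p)
    (X : Ω → 𝓧) {Z : Ω → ℝ} (hZ : ∀ ω, Z ω = 0 ∨ Z ω = 1)
    (hrel : ∀ x, 0 < pprob p (fun ω => X ω = x) →
      0 < cprob p (fun ω => Z ω = 1) (fun ω => X ω = x) ∧
        cprob p (fun ω => Z ω = 1) (fun ω => X ω = x) < 1) :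
    0 < pexp p (fun ω => (Z ω - condMean p X Z (X ω)) ^ 2) := by
  obtain ⟨ω₀, hω₀⟩ := hp.exists_pos
  have hm : condMean p X Z (X ω₀) = cprob p (fun ω => Z ω = 1) (fun ω => X ω = X ω₀) := by
    change pexpOn p _ Z / _ = _
    rw [pexpOn_eq_pprob_of_binary hZ]
    rfl
  obtain ⟨hm0, hm1⟩ := hrel (X ω₀) (hω₀.trans_le (le_pprob hp.1 rfl))
  have hsq : 0 < (Z ω₀ - condMean p X Z (X ω₀)) ^ 2 := by
    rw [hm]
    rcases hZ ω₀ with h | h <;> rw [h] <;> nlinarith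
  calc 0 < p ω₀ * (Z ω₀ - condMean p X Z (X ω₀)) ^ 2 := mul_pos hω₀ hsq
    _ ≤ ∑ ω, p ω * (Z ω - condMean p X Z (X ω)) ^ 2 :=
      single_le_sum (f := fun ω => p ω * (Z ω - condMean p X Z (X ω)) ^ 2)
        (fun ω _ => mul_nonneg (hp.1 ω) (sq_nonneg _)) (mem_univ ω₀)

section LATE

variable {Ω 𝓧 : Type*} [Fintype Ω] (p : Ω → ℝ) (X : Ω → 𝓧) (D0 D1 Y0 Y1 : Ω → ℝ)

/- The paper's `c(x)`, `π(x)` and `τ(x)`. -/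
noncomputable def complierSign (x : 𝓧) : ℝ :=
  Real.sign (cprob p (fun ω => D0 ω ≤ D1 ω) (fun ω => X ω = x) -
    cprob p (fun ω => D1 ω ≤ D0 ω) (fun ω => X ω = x))

noncomputable def switcherShare (x : 𝓧) : ℝ :=
  cprob p (fun ω => D1 ω ≠ D0 ω) (fun ω => X ω = x)

noncomputable def condLATE (x : 𝓧) : ℝ :=
  eexp p (fun ω => D1 ω ≠ D0 ω ∧ X ω = x) (fun ω => Y1 ω - Y0 ω)

variable {p X D0 D1}

lemma pexp_comp_mul_mul_sub_eq_sign_mul (hp0 : ∀ ω, 0 ≤ p ω) (hD0 : ∀ ω, D0 ω = 0 ∨ D0 ω = 1)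
    (hD1 : ∀ ω, D1 ω = 0 ∨ D1 ω = 1)
    (hmono : ∀ x, (∀ ω, 0 < p ω → X ω = x → D0 ω ≤ D1 ω) ∨
      (∀ ω, 0 < p ω → X ω = x → D1 ω ≤ D0 ω))
    (v : 𝓧 → ℝ) (f : Ω → ℝ) {τ : 𝓧 → ℝ}
    (hτ : ∀ x, pexpOn p (fun ω => D1 ω ≠ D0 ω ∧ X ω = x) f =
      pprob p (fun ω => D1 ω ≠ D0 ω ∧ X ω = x) * τ x) :
    pexp p (fun ω => v (X ω) * (f ω * (D1 ω - D0 ω))) =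
      pexp p (fun ω => complierSign p X D0 D1 (X ω) * switcherShare p X D0 D1 (X ω) *
        v (X ω) * τ (X ω)) :=
  pexp_eq_pexp_comp_of_pexpOn X hp0
    (H := fun x => complierSign p X D0 D1 x * switcherShare p X D0 D1 x * v x * τ x)
    fun x _ => by
      rw [pexpOn_comp_mul, pexpOn_mul_sub_eq_sign_mul hp0 hD0 hD1 (hmono x), hτ,
        ← pprob_mul_cprob hp0, complierSign, switcherShare]
      ring

end LATE

/-- Theorem 2: under Assumption IV, weak monotonicity, and a
linear instrument propensity score, the just-identified linear IV estimand
satisfies `β_IV = E[c(X)·π(X)·Var[Z|X]·τ(X)] / E[c(X)·π(X)·Var[Z|X]]`,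
where `c(x) ∈ {-1,1}` is the sign distinguishing complier and defier regions. -/
theorem stmt9 {Ω : Type*} [Fintype Ω] {k : ℕ} (p : Ω → ℝ) (hp : IsProb p)
    (X : Ω → Fin k → ℝ) (Z D0 D1 Y0 Y1 : Ω → ℝ)
    (hZ : ∀ ω, Z ω = 0 ∨ Z ω = 1)
    (hD0 : ∀ ω, D0 ω = 0 ∨ D0 ω = 1) (hD1 : ∀ ω, D1 ω = 0 ∨ D1 ω = 1)
    (hindep : ∀ (x : Fin k → ℝ) (y0 y1 d0 d1 z : ℝ),
      pprob p (fun ω => X ω = x ∧ Y0 ω = y0 ∧ Y1 ω = y1 ∧ D0 ω = d0 ∧ D1 ω = d1 ∧ Z ω = z) *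
          pprob p (fun ω => X ω = x)
        = pprob p (fun ω => X ω = x ∧ Y0 ω = y0 ∧ Y1 ω = y1 ∧ D0 ω = d0 ∧ D1 ω = d1) *
            pprob p (fun ω => X ω = x ∧ Z ω = z))
    (hrel : ∀ x : Fin k → ℝ, 0 < pprob p (fun ω => X ω = x) →
      0 < cprob p (fun ω => Z ω = 1) (fun ω => X ω = x) ∧
      cprob p (fun ω => Z ω = 1) (fun ω => X ω = x) < 1 ∧
      0 < cprob p (fun ω => D1 ω ≠ D0 ω) (fun ω => X ω = x))
    (hmono : ∀ x : Fin k → ℝ,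
      (∀ ω, 0 < p ω → X ω = x → D0 ω ≤ D1 ω) ∨
      (∀ ω, 0 < p ω → X ω = x → D1 ω ≤ D0 ω))
    (D Y : Ω → ℝ)
    (hD : ∀ ω, D ω = if Z ω = 1 then D1 ω else D0 ω)
    (hY : ∀ ω, Y ω = if D ω = 1 then Y1 ω else Y0 ω)
    -- linear instrument propensity score
    (α : Fin k → ℝ)
    (hlin : ∀ x : Fin k → ℝ, 0 < pprob p (fun ω => X ω = x) →
      condMean p X Z x = ∑ j, x j * α j)
    -- β_IV as the ratio of the reduced-form and first-stage coefficients on Z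
    (bY : ℝ) (gY : Fin k → ℝ)
    (hbY : ∀ (b' : ℝ) (g' : Fin k → ℝ),
      pexp p (fun ω => (Y ω - Z ω * bY - ∑ j, X ω j * gY j) ^ 2) ≤
        pexp p (fun ω => (Y ω - Z ω * b' - ∑ j, X ω j * g' j) ^ 2))
    (bD : ℝ) (gD : Fin k → ℝ)
    (hbD : ∀ (b' : ℝ) (g' : Fin k → ℝ),
      pexp p (fun ω => (D ω - Z ω * bD - ∑ j, X ω j * gD j) ^ 2) ≤
        pexp p (fun ω => (D ω - Z ω * b' - ∑ j, X ω j * g' j) ^ 2)) :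
    bY / bD =
      pexp p (fun ω =>
          Real.sign (cprob p (fun ω' => D0 ω' ≤ D1 ω') (fun ω' => X ω' = X ω) -
              cprob p (fun ω' => D1 ω' ≤ D0 ω') (fun ω' => X ω' = X ω)) *
            cprob p (fun ω' => D1 ω' ≠ D0 ω') (fun ω' => X ω' = X ω) *
            condVar p X Z (X ω) *
            eexp p (fun ω' => D1 ω' ≠ D0 ω' ∧ X ω' = X ω) (fun ω' => Y1 ω' - Y0 ω')) /
        pexp p (fun ω =>
          Real.sign (cprob p (fun ω' => D0 ω' ≤ D1 ω') (fun ω' => X ω' = X ω) -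
              cprob p (fun ω' => D1 ω' ≤ D0 ω') (fun ω' => X ω' = X ω)) *
            cprob p (fun ω' => D1 ω' ≠ D0 ω') (fun ω' => X ω' = X ω) *
            condVar p X Z (X ω)) := by
  have hp0 := hp.1
  set m := condMean p X Z
  have hmX : ∀ ω, 0 < p ω → m (X ω) = ∑ j, X ω j * α j :=
    fun ω hω => hlin (X ω) (hω.trans_le (le_pprob hp0 rfl))
  have horth : ∀ a : Fin k → ℝ, pexp p (fun ω => (∑ j, X ω j * a j) * (Z ω - m (X ω))) = 0 :=
    fun a => pexp_comp_mul_sub_condMean X hp0 Z (fun x => ∑ j, x j * a j)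
  have hU := pexp_sq_sub_condMean_pos hp X hZ fun x hx => ⟨(hrel x hx).1, (hrel x hx).2.1⟩
  set W := fun ω => (Y0 ω, Y1 ω, D0 ω, D1 ω)
  have hCI : ∀ x w, pprob p (fun ω => X ω = x ∧ W ω = w ∧ Z ω = 1) * pprob p (fun ω => X ω = x)
      = pprob p (fun ω => X ω = x ∧ W ω = w) * pprob p (fun ω => X ω = x ∧ Z ω = 1) :=
    fun x ⟨y0, y1, d0, d1⟩ => by
      simpa only [W, Prod.mk.injEq, and_assoc] using hindep x y0 y1 d0 d1 1
  have hDU := pexp_ite_mul_sub_condMean hp0 X W hZ hCI (fun w => w.2.2.1) (fun w => w.2.2.2) hD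
  have hYU := pexp_ite_mul_sub_condMean hp0 X W hZ hCI
    (fun w => w.2.2.1 * w.2.1 + (1 - w.2.2.1) * w.1)
    (fun w => w.2.2.2 * w.2.1 + (1 - w.2.2.2) * w.1)
    (observed_eq_ite hZ hD0 hD1 hD hY)
  calc bY / bD = bY * pexp p (fun ω => (Z ω - m (X ω)) ^ 2) /
        (bD * pexp p (fun ω => (Z ω - m (X ω)) ^ 2)) := (mul_div_mul_right _ _ hU.ne').symm
    _ = pexp p (fun ω => Y ω * (Z ω - m (X ω))) / pexp p (fun ω => D ω * (Z ω - m (X ω))) := by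
      rw [ols_coeff_mul_pexp_sq X hp0 hbY hmX horth, ols_coeff_mul_pexp_sq X hp0 hbD hmX horth]
    _ = pexp p (fun ω => condVar p X Z (X ω) * ((Y1 ω - Y0 ω) * (D1 ω - D0 ω))) /
        pexp p (fun ω => condVar p X Z (X ω) * (1 * (D1 ω - D0 ω))) := by
      rw [hYU, hDU]
      congr 1 <;> congr 1 <;> funext ω <;> ring
    _ = _ := by
      rw [pexp_comp_mul_mul_sub_eq_sign_mul hp0 hD0 hD1 hmono _ _
          (τ := condLATE p X D0 D1 Y0 Y1) fun _ => (pprob_mul_eexp hp0 _ _).symm,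
        pexp_comp_mul_mul_sub_eq_sign_mul hp0 hD0 hD1 hmono _ _
          (τ := fun _ => 1) fun _ => by rw [pexpOn_one, mul_one]]
      simp only [mul_one]
      rfl
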